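/- arXiv:1705.06815 — 4 statements merged into one kernel-verified Lean document; each statement's English description precedes it below -/
import Mathlib

section
/- Fix an integer r ≥ 2, a real α ∈ [0,1), and let φ_α ∈ [0,α) be the unique solution of φ - φ^r/r = α(1-1/r). Then for every β with φ_α < β ≤ 1, one has (β - α(1-1/r))/β^r ≥ 1/r. -/
theorem abs_pow_sub_pow_le_of_abs_le_one {R : Type*} [CommRing R] [LinearOrder R]
    [IsOrderedRing R] {a b : R} (n : ℕ) (ha : |a| ≤ 1) (hb : |b| ≤ 1) :
    |a ^ n - b ^ n| ≤ |a - b| * n :=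
  (abs_pow_sub_pow_le a b n).trans <|
    mul_le_of_le_one_right (by positivity) (pow_le_one₀ (by positivity) (max_le ha hb))

theorem ratio_ge_one_div_r_general (r : ℕ) (hr : 2 ≤ r) (α φ β : ℝ)
    (hφ : φ ∈ Set.Ico 0 α) (hφeq : φ - φ ^ r / r = α * (1 - 1 / r))
    (hβ1 : φ < β) (hβ2 : β ≤ 1) :
    (β - α * (1 - 1 / r)) / β ^ r ≥ 1 / r := by
  have hr0 : (0 : ℝ) < r := by exact_mod_cast (by omega : 0 < r)
  have hβ0 : 0 < β := hφ.1.trans_lt hβ1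
  have hpow : β ^ r - φ ^ r ≤ (β - φ) * r := by
    have := abs_pow_sub_pow_le_of_abs_le_one r (abs_le.2 ⟨by linarith, hβ2⟩)
      (abs_le.2 ⟨by linarith [hφ.1], hβ1.le.trans hβ2⟩)
    rwa [abs_of_pos (sub_pos.2 hβ1),
      abs_of_pos (sub_pos.2 (pow_lt_pow_left₀ hβ1 hφ.1 (by omega)))] at this
  -- Substituting the defining equation of `φ`, the claim becomes `β ^ r - φ ^ r ≤ r * (β - φ)`.
  rw [← hφeq, ge_iff_le, le_div_iff₀ (by positivity), div_mul_eq_mul_div, one_mul,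
    div_le_iff₀ hr0]
  linarith [div_mul_cancel₀ (φ ^ r) hr0.ne']

theorem ratio_ge_one_div_r (r : ℕ) (hr : 2 ≤ r) (α φ β : ℝ)
    (hα0 : 0 ≤ α) (hα1 : α < 1)
    (hφ : φ ∈ Set.Ico 0 α) (hφeq : φ - φ ^ r / r = α * (1 - 1 / r))
    (hβ1 : φ < β) (hβ2 : β ≤ 1) :
    (β - α * (1 - 1 / r)) / β ^ r ≥ 1 / r :=
  ratio_ge_one_div_r_general r hr α φ β hφ hφeq hβ1 hβ2
end

section
/- Fix an integer r ≥ 2 and reals 0 < β' < β ≤ 1. Define g(β') = ((β^r - β'^r)/(r β'^{r-1})) · log(e β'^{r-1}) + (r-2)(β - β') - (r-1)(β log β - β' log β'). Then g(β') < 0. -/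
/-!
As a function of `β'`, `g` vanishes at `β' = β` and has derivative
`(r - 1)² (β^r - β'^r) (-log β') / (r β'^r)`, which is positive for `0 < β' < β ≤ 1`.
So `g` is strictly increasing on `[β', β]` and hence negative at `β'`.
-/

open Real Set

/-- The function `g` of the paper, as a function of `β'`. -/
noncomputable def diagGap (r : ℕ) (β x : ℝ) : ℝ :=
  ((β ^ r - x ^ r) / (r * x ^ (r - 1))) * log (exp 1 * x ^ (r - 1))
    + ((r : ℝ) - 2) * (β - x) - ((r : ℝ) - 1) * (β * log β - x * log x)

section diagGap

variable {r : ℕ} {β : ℝ}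

theorem diagGap_self : diagGap r β β = 0 := by
  simp [diagGap]

theorem hasDerivAt_diagGap (hr : 1 ≤ r) {x : ℝ} (hx : 0 < x) :
    HasDerivAt (diagGap r β)
      (((r : ℝ) - 1) ^ 2 * (β ^ r - x ^ r) * -log x / (r * x ^ r)) x := by
  obtain ⟨n, rfl⟩ : ∃ n, r = n + 1 := ⟨r - 1, by omega⟩
  unfold diagGap
  simp only [add_tsub_cancel_right]
  have hquot := ((hasDerivAt_pow (n + 1) x).const_sub (β ^ (n + 1))).div
    ((hasDerivAt_pow n x).const_mul ((n + 1 : ℕ) : ℝ)) (by positivity)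
  have hlog := ((hasDerivAt_pow n x).const_mul (exp 1)).log (by positivity)
  have hxlog := (hasDerivAt_id x).mul (hasDerivAt_log hx.ne')
  refine (((hquot.mul hlog).add (((hasDerivAt_id x).const_sub β).const_mul _)).sub
    ((hxlog.const_sub (β * log β)).const_mul _)).congr_deriv ?_
  rw [log_mul (exp_ne_zero 1) (pow_ne_zero _ hx.ne'), log_exp, log_pow]
  simp only [Pi.div_apply, id]
  cases n with
  | zero => norm_num
  | succ k =>
    push_cast
    field_simp
    ring

theorem diagGap_strictMonoOn (hr : 2 ≤ r) (hβ : β ≤ 1) {a : ℝ} (ha : 0 < a) :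
    StrictMonoOn (diagGap r β) (Icc a β) := by
  have hderiv {x : ℝ} (hx : 0 < x) := hasDerivAt_diagGap (β := β) (by omega : 1 ≤ r) hx
  refine strictMonoOn_of_deriv_pos (convex_Icc a β)
    (fun x hx => (hderiv (ha.trans_le hx.1)).continuousAt.continuousWithinAt) ?_
  intro x hx
  rw [interior_Icc] at hx
  have hx0 : 0 < x := ha.trans hx.1
  have hlog : 0 < -log x := neg_pos.2 (log_neg hx0 (hx.2.trans_le hβ))
  have hpow : x ^ r < β ^ r := pow_lt_pow_left₀ hx.2 hx0.le (by omega)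
  have hr1 : (0 : ℝ) < r - 1 := by
    rw [sub_pos, Nat.one_lt_cast]
    omega
  rw [(hderiv hx0).deriv]
  exact div_pos (mul_pos (mul_pos (pow_pos hr1 2) (sub_pos.2 hpow)) hlog) (by positivity)

end diagGap

theorem diag_coincide_neg (r : ℕ) (hr : 2 ≤ r) (β' β : ℝ)
    (h0 : 0 < β') (h1 : β' < β) (h2 : β ≤ 1) :
    ((β ^ r - β' ^ r) / (r * β' ^ (r - 1))) * Real.log (Real.exp 1 * β' ^ (r - 1))
      + ((r : ℝ) - 2) * (β - β')
      - ((r : ℝ) - 1) * (β * Real.log β - β' * Real.log β') < 0 := by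
  show diagGap r β β' < 0
  calc diagGap r β β' < diagGap r β β :=
        diagGap_strictMonoOn hr h2 h0 (left_mem_Icc.2 h1.le) (right_mem_Icc.2 h1.le) h1
    _ = 0 := diagGap_self
end

section
/- Fix integers r ≥ 2, reals α ∈ (0,1), γ_r = 1-1/r, α_r = αγ_r, η = min{α, β} for some β with η ∈ (α_r, 1], and α' ∈ [α_r, η). Let f(x) = (α' - α_r)(x/α')^r + α_r and f_*(x) = (η - α_r)(x/η)^r + α_r. Then I(f, 0, α') + I(id, α', η) < I(f_*, 0, η), where I(g,s,t) = ∫_s^t g'(x) log(e x^{r-1}/g'(x)) dx and id is the identity. -/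
open Real intervalIntegral
lemma deriv_poly (C K a : ℝ) (ha : a ≠ 0) (r : ℕ) (hr : 2 ≤ r) (x : ℝ) :
    deriv (fun y => C * (y / a) ^ r + K) x = (C * r / a ^ r) * x ^ (r - 1) := by
  have h : HasDerivAt (fun y => C * (y / a) ^ r + K)
      (C * ((r : ℝ) * (x / a) ^ (r - 1) * (1 / a))) x :=
    ((((hasDerivAt_id x).div_const a).pow r).const_mul C).add_const K
  rw [h.deriv, div_pow]
  have har : a ^ r = a ^ (r - 1) * a := by rw [← pow_succ]; congr 1; omega
  rw [har]
  field_simp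

lemma poly_integral (r : ℕ) (hr : 2 ≤ r) (a C K : ℝ) (ha : 0 < a) (hC : 0 ≤ C) :
    (∫ x in (0:ℝ)..a, deriv (fun y => C * (y / a) ^ r + K) x *
        Real.log (Real.exp 1 * x ^ (r - 1) /
          deriv (fun y => C * (y / a) ^ r + K) x))
      = C - C * Real.log C - C * Real.log r + (r : ℝ) * (C * Real.log a) := by
  have hrR : (2:ℝ) ≤ (r:ℝ) := by exact_mod_cast hr
  have hrne : (r:ℝ) ≠ 0 := by positivity
  have hane : a ≠ 0 := ha.ne'
  simp only [deriv_poly C K a hane r hr]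
  rcases eq_or_lt_of_le hC with h | hCpos
  · simp [← h]
  · set D : ℝ := C * r / a ^ r with hD
    have hDpos : 0 < D := by positivity
    have key : ∀ x ∈ Set.uIcc (0:ℝ) a,
        D * x ^ (r - 1) * Real.log (Real.exp 1 * x ^ (r - 1) / (D * x ^ (r - 1)))
          = (D * (1 - Real.log D)) * x ^ (r - 1) := by
      intro x hx
      rw [Set.uIcc_of_le ha.le] at hx
      rcases eq_or_lt_of_le hx.1 with h0 | h0
      · rw [← h0]
        rw [zero_pow (by omega)]
        ring
      · have hxp : (0:ℝ) < x ^ (r - 1) := by positivity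
        have : Real.exp 1 * x ^ (r - 1) / (D * x ^ (r - 1)) = Real.exp 1 / D := by
          field_simp
        rw [this, Real.log_div (Real.exp_ne_zero 1) hDpos.ne', Real.log_exp]
        ring
    rw [intervalIntegral.integral_congr key, intervalIntegral.integral_const_mul,
      integral_pow]
    have hcast : ((r - 1 : ℕ) : ℝ) + 1 = (r : ℝ) := by
      have : ((r - 1 : ℕ) : ℝ) = (r : ℝ) - 1 := by
        push_cast [Nat.cast_sub (by omega : 1 ≤ r)]; ring
      rw [this]; ring
    rw [zero_pow (by omega : r - 1 + 1 ≠ 0)]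
    have hpow : a ^ (r - 1 + 1) = a ^ r := by congr 1; omega
    rw [hpow, hcast]
    have hlogD : Real.log D = Real.log C + Real.log r - (r:ℝ) * Real.log a := by
      rw [hD, Real.log_div (by positivity) (by positivity), Real.log_mul hCpos.ne' hrne,
        Real.log_pow]
    have hDa : D * (a ^ r / (r:ℝ)) = C := by
      rw [hD]; field_simp
    rw [hlogD]
    calc D * (1 - (Real.log C + Real.log ↑r - ↑r * Real.log a)) * ((a ^ r - 0) / ↑r)
        = (D * (a ^ r / (r:ℝ))) * (1 - (Real.log C + Real.log ↑r - ↑r * Real.log a)) := by ring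
      _ = C - C * Real.log C - C * Real.log ↑r + ↑r * (C * Real.log a) := by rw [hDa]; ring

lemma id_integral (r : ℕ) (hr : 2 ≤ r) (s t : ℝ) (hs : 0 < s) (hst : s ≤ t) :
    (∫ x in s..t, deriv (fun y : ℝ => y) x *
        Real.log (Real.exp 1 * x ^ (r - 1) / deriv (fun y : ℝ => y) x))
      = (t - s) + ((r:ℝ) - 1) * ((t * Real.log t - t) - (s * Real.log s - s)) := by
  have ht : 0 < t := lt_of_lt_of_le hs hst
  have key : ∀ x ∈ Set.uIcc s t,
      deriv (fun y : ℝ => y) x *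
          Real.log (Real.exp 1 * x ^ (r - 1) / deriv (fun y : ℝ => y) x)
        = 1 + ((r:ℝ) - 1) * Real.log x := by
    intro x hx
    rw [Set.uIcc_of_le hst] at hx
    have hx0 : 0 < x := lt_of_lt_of_le hs hx.1
    have hd : deriv (fun y : ℝ => y) x = 1 := by
      simpa using (hasDerivAt_id x).deriv
    rw [hd, div_one, one_mul,
      Real.log_mul (Real.exp_ne_zero 1) (by positivity), Real.log_exp, Real.log_pow]
    have : ((r - 1 : ℕ) : ℝ) = (r:ℝ) - 1 := by
      push_cast [Nat.cast_sub (by omega : 1 ≤ r)]; ring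
    rw [this]
  rw [intervalIntegral.integral_congr key]
  have h1 : IntervalIntegrable (fun _ : ℝ => (1:ℝ)) MeasureTheory.volume s t :=
    intervalIntegrable_const
  have h2 : IntervalIntegrable (fun x : ℝ => ((r:ℝ) - 1) * Real.log x)
      MeasureTheory.volume s t := by
    apply ContinuousOn.intervalIntegrable
    apply ContinuousOn.mul continuousOn_const
    intro x hx
    rw [Set.uIcc_of_le hst] at hx
    exact (Real.continuousAt_log (by linarith [hx.1] : x ≠ 0)).continuousWithinAt
  rw [intervalIntegral.integral_add h1 h2, intervalIntegral.integral_const_mul,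
    integral_log, intervalIntegral.integral_const]
  simp only [smul_eq_mul, mul_one]
  ring

lemma G_mono (r : ℕ) (hr : 2 ≤ r) (c α α' η : ℝ) (hc : 0 < c)
    (hrel : (r:ℝ) * c = ((r:ℝ) - 1) * α) (hηα : η ≤ α)
    (h1 : c ≤ α') (h2 : α' < η) :
    (fun a => (a - c) - (a - c) * Real.log (a - c) - (a - c) * Real.log r
        + (r:ℝ) * ((a - c) * Real.log a) + (η - a)
        + ((r:ℝ) - 1) * ((η * Real.log η - η) - (a * Real.log a - a))) α'
      < (fun a => (a - c) - (a - c) * Real.log (a - c) - (a - c) * Real.log r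
        + (r:ℝ) * ((a - c) * Real.log a) + (η - a)
        + ((r:ℝ) - 1) * ((η * Real.log η - η) - (a * Real.log a - a))) η := by
  have hrR : (2:ℝ) ≤ (r:ℝ) := by exact_mod_cast hr
  set g : ℝ → ℝ := fun a => (a - c) - (a - c) * Real.log (a - c) - (a - c) * Real.log r
        + (r:ℝ) * ((a - c) * Real.log a) + (η - a)
        + ((r:ℝ) - 1) * ((η * Real.log η - η) - (a * Real.log a - a)) with hg
  have hmono : StrictMonoOn g (Set.Icc α' η) := by
    apply strictMonoOn_of_deriv_pos (convex_Icc α' η)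
    · -- continuity
      have hml : Continuous fun a : ℝ => (a - c) * Real.log (a - c) :=
        Real.continuous_mul_log.comp (continuous_id.sub continuous_const)
      have hlog : ContinuousOn Real.log (Set.Icc α' η) := by
        intro x hx
        have : x ≠ 0 := by
          have := hx.1; nlinarith [hc, h1]
        exact (Real.continuousAt_log this).continuousWithinAt
      apply ContinuousOn.add
      apply ContinuousOn.add
      apply ContinuousOn.add
      apply ContinuousOn.sub
      apply ContinuousOn.sub
      · exact (continuous_id.sub continuous_const).continuousOn
      · exact hml.continuousOn
      · exact ((continuous_id.sub continuous_const).mul continuous_const).continuousOn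
      · exact continuousOn_const.mul (((continuous_id.sub continuous_const).continuousOn).mul hlog)
      · exact (continuous_const.sub continuous_id).continuousOn
      · exact (continuous_const.mul (continuous_const.sub
          (Real.continuous_mul_log.sub continuous_id))).continuousOn
    · intro a ha
      rw [interior_Icc] at ha
      have ha0 : 0 < a := lt_of_le_of_lt (le_trans hc.le h1) ha.1 |>.trans_le le_rfl
      have hac : 0 < a - c := by have := ha.1; linarith [h1]
      have haα : a < α := lt_of_lt_of_le ha.2 hηα
      -- derivative
      have hd1 : HasDerivAt (fun a : ℝ => a - c) 1 a := (hasDerivAt_id a).sub_const c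
      have hd2 : HasDerivAt (fun a : ℝ => (a - c) * Real.log (a - c))
          ((Real.log (a - c) + 1) * 1) a :=
        by have := (Real.hasDerivAt_mul_log hac.ne').comp a hd1; exact this
      have hd3 : HasDerivAt (fun a : ℝ => (a - c) * Real.log (r:ℝ)) (1 * Real.log r) a :=
        hd1.mul_const _
      have hd4 : HasDerivAt (fun a : ℝ => (r:ℝ) * ((a - c) * Real.log a))
          ((r:ℝ) * (1 * Real.log a + (a - c) * a⁻¹)) a :=
        (hd1.mul (Real.hasDerivAt_log ha0.ne')).const_mul _
      have hd5 : HasDerivAt (fun a : ℝ => η - a) (-1) a := by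
        simpa using (hasDerivAt_id a).const_sub η
      have hd6 : HasDerivAt (fun a : ℝ => ((r:ℝ) - 1) *
          ((η * Real.log η - η) - (a * Real.log a - a)))
          (((r:ℝ) - 1) * (-(Real.log a + 1 - 1))) a := by
        exact (((Real.hasDerivAt_mul_log ha0.ne').sub (hasDerivAt_id a)).const_sub
          (η * Real.log η - η)).const_mul _
      have hdg : HasDerivAt g
          (1 - (Real.log (a - c) + 1) * 1 - 1 * Real.log r
            + (r:ℝ) * (1 * Real.log a + (a - c) * a⁻¹) + (-1)
            + ((r:ℝ) - 1) * (-(Real.log a + 1 - 1))) a := by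
        rw [hg]
        exact ((((hd1.sub hd2).sub hd3).add hd4).add hd5).add hd6
      rw [hdg.deriv]
      -- positivity of the derivative
      set u : ℝ := (r:ℝ) * (a - c) / a with hu
      have hupos : 0 < u := by positivity
      have hune : u ≠ 1 := by
        intro h
        have : (r:ℝ) * (a - c) = a := by
          rw [hu, div_eq_one_iff_eq ha0.ne'] at h; exact h
        have : ((r:ℝ) - 1) * a = ((r:ℝ) - 1) * α := by nlinarith [hrel]
        have : a = α := by
          have hne : (r:ℝ) - 1 ≠ 0 := by linarith
          exact mul_left_cancel₀ hne this
        linarith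
      have hlogu : Real.log u < u - 1 := Real.log_lt_sub_one_of_pos hupos hune
      have hlogu_eq : Real.log u = Real.log r + Real.log (a - c) - Real.log a := by
        rw [hu, Real.log_div (by positivity) ha0.ne', Real.log_mul (by positivity) hac.ne']
      have heq : 1 - (Real.log (a - c) + 1) * 1 - 1 * Real.log r
            + (r:ℝ) * (1 * Real.log a + (a - c) * a⁻¹) + (-1)
            + ((r:ℝ) - 1) * (-(Real.log a + 1 - 1))
          = (u - 1) - Real.log u := by
        rw [hlogu_eq, hu]
        field_simp
        ring
      rw [heq]
      linarith
  exact hmono (Set.left_mem_Icc.mpr h2.le) (Set.right_mem_Icc.mpr h2.le) h2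

theorem early_touch_suboptimal (r : ℕ) (hr : 2 ≤ r) (α α' η : ℝ)
    (hα0 : 0 < α) (hα1 : α < 1)
    (hη1 : α * (1 - 1 / r) < η) (hη2 : η ≤ α) (hη3 : η ≤ 1)
    (h1 : α * (1 - 1 / r) ≤ α') (h2 : α' < η) :
    (∫ x in (0:ℝ)..α',
        deriv (fun y => (α' - α * (1 - 1 / r)) * (y / α') ^ r + α * (1 - 1 / r)) x *
          Real.log (Real.exp 1 * x ^ (r - 1) /
            deriv (fun y => (α' - α * (1 - 1 / r)) * (y / α') ^ r + α * (1 - 1 / r)) x))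
      + (∫ x in α'..η,
          deriv (fun y : ℝ => y) x *
            Real.log (Real.exp 1 * x ^ (r - 1) / deriv (fun y : ℝ => y) x))
      < ∫ x in (0:ℝ)..η,
          deriv (fun y => (η - α * (1 - 1 / r)) * (y / η) ^ r + α * (1 - 1 / r)) x *
            Real.log (Real.exp 1 * x ^ (r - 1) /
              deriv (fun y => (η - α * (1 - 1 / r)) * (y / η) ^ r + α * (1 - 1 / r)) x) := by
  have hrR : (2:ℝ) ≤ (r:ℝ) := by exact_mod_cast hr
  have hγ : 0 < 1 - 1 / (r:ℝ) := by
    have : (1:ℝ) / r < 1 := by rw [div_lt_one (by linarith)]; linarith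
    linarith
  set c : ℝ := α * (1 - 1 / (r:ℝ)) with hcdef
  have hc : 0 < c := mul_pos hα0 hγ
  have hα'0 : 0 < α' := hc.trans_le h1
  have hη0 : 0 < η := hc.trans hη1
  have hC1 : 0 ≤ α' - c := sub_nonneg.mpr h1
  have hC2 : 0 ≤ η - c := by linarith
  have hrel : (r:ℝ) * c = ((r:ℝ) - 1) * α := by
    rw [hcdef]; field_simp
  rw [poly_integral r hr α' (α' - c) c hα'0 hC1,
    id_integral r hr α' η hα'0 h2.le,
    poly_integral r hr η (η - c) c hη0 hC2]
  have key : (α' - c) - (α' - c) * Real.log (α' - c) - (α' - c) * Real.log r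
        + (r:ℝ) * ((α' - c) * Real.log α') + (η - α')
        + ((r:ℝ) - 1) * ((η * Real.log η - η) - (α' * Real.log α' - α'))
      < (η - c) - (η - c) * Real.log (η - c) - (η - c) * Real.log r
        + (r:ℝ) * ((η - c) * Real.log η) + (η - η)
        + ((r:ℝ) - 1) * ((η * Real.log η - η) - (η * Real.log η - η)) :=
    G_mono r hr c α α' η hc hrel hη2 h1 h2
  linarith
end

section
/- Let m ≥ 1 be an integer, x_0 < x_1 < ⋯ < x_m evenly spaced reals, and σ : X × X × ℝ → ℝ (X = {x_0,…,x_m}) with continuous partial derivative σ_w in the third argument. For a,b ∈ ℝ, let F be the set of functions f : X → ℝ with f(x_0) = a and f(x_m) = b, and define J(f) = Σ_{i=0}^{m-1} σ(x_i, x_{i+1}, Δf_i/Δx_i) Δx_i where Δf_i = f(x_{i+1}) - f(x_i) and Δx_i = x_{i+1} - x_i. If f̂ is a local extremum of J on F (identifying F with ℝ^{m-1} via the interior values), then there exists c ∈ ℝ such that σ_w(x_i, x_{i+1}, Δf̂_i/Δx_i) = c for all 0 ≤ i < m. -/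
/-!
Moving the extremal along the line `f + t • η`, with `η` vanishing at both endpoints, gives a real
function of `t` with a local extremum at `0`, so its derivative there, the first variation
`∑ σw(Δf_i / d) (η_{i+1} - η_i)`, vanishes. Taking `η` to be the indicator of a single interior
node `j + 1` leaves only the two increments adjacent to it, and the first variation becomes the
difference of the momenta on the intervals `j` and `j + 1`.
-/

open Finset Filter Topology

def discreteAction (L : ℕ → ℝ → ℝ) (m : ℕ) (g : ℕ → ℝ) : ℝ :=
  ∑ i ∈ range m, L i (g (i + 1) - g i)

theorem hasDerivAt_discreteAction_add_smul {L L' : ℕ → ℝ → ℝ}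
    (hL : ∀ i v, HasDerivAt (L i) (L' i v) v) (m : ℕ) (f η : ℕ → ℝ) :
    HasDerivAt (fun t : ℝ => discreteAction L m (f + t • η))
      (∑ i ∈ range m, L' i (f (i + 1) - f i) * (η (i + 1) - η i)) 0 := by
  unfold discreteAction
  refine HasDerivAt.fun_sum fun i _ => ?_
  have hline : HasDerivAt (fun t : ℝ => f (i + 1) - f i + t * (η (i + 1) - η i))
      (η (i + 1) - η i) 0 := by
    simpa using ((hasDerivAt_id (0 : ℝ)).mul_const (η (i + 1) - η i)).const_add (f (i + 1) - f i)
  refine ((hL i _).comp_of_eq 0 hline (by simp)).congr_of_eventuallyEq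
    (Eventually.of_forall fun t => ?_)
  simp only [Pi.add_apply, Pi.smul_apply, smul_eq_mul, Function.comp_apply]
  ring_nf

theorem eventually_abs_add_smul_sub_lt (f η : ℕ → ℝ) (m : ℕ) {ε : ℝ} (hε : 0 < ε) :
    ∀ᶠ t in 𝓝 (0 : ℝ), ∀ i, i ≤ m → |(f + t • η) i - f i| < ε := by
  refine (Filter.eventually_all_finite (Set.finite_Iic m)).2 fun i _ => ?_
  have hcont : Continuous fun t : ℝ => (f + t • η) i - f i := by
    simp only [Pi.add_apply, Pi.smul_apply, smul_eq_mul, add_sub_cancel_left]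
    fun_prop
  have := hcont.tendsto 0
  simp only [zero_smul, add_zero, sub_self] at this
  exact (this.eventually (eventually_abs_sub_lt 0 hε)).mono fun t ht => by simpa using ht

theorem discreteAction_firstVariation_eq_zero {L L' : ℕ → ℝ → ℝ}
    (hL : ∀ i v, HasDerivAt (L i) (L' i v) v) {m : ℕ} {a b : ℝ} {f η : ℕ → ℝ}
    (hfa : f 0 = a) (hfb : f m = b) (hη0 : η 0 = 0) (hηm : η m = 0)
    (hext : ∃ ε > 0,
      (∀ g : ℕ → ℝ, g 0 = a → g m = b → (∀ i, i ≤ m → |g i - f i| < ε) →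
        discreteAction L m g ≤ discreteAction L m f) ∨
      (∀ g : ℕ → ℝ, g 0 = a → g m = b → (∀ i, i ≤ m → |g i - f i| < ε) →
        discreteAction L m f ≤ discreteAction L m g)) :
    ∑ i ∈ range m, L' i (f (i + 1) - f i) * (η (i + 1) - η i) = 0 := by
  have hg0 (t : ℝ) : (f + t • η) 0 = a := by simp [hfa, hη0]
  have hgm (t : ℝ) : (f + t • η) m = b := by simp [hfb, hηm]
  obtain ⟨ε, hε, hext⟩ := hext
  have hnear := eventually_abs_add_smul_sub_lt f η m hε
  rcases hext with hmax | hmin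
  · refine IsLocalMax.hasDerivAt_eq_zero ?_ (hasDerivAt_discreteAction_add_smul hL m f η)
    filter_upwards [hnear] with t ht
    simpa using hmax _ (hg0 t) (hgm t) ht
  · refine IsLocalMin.hasDerivAt_eq_zero ?_ (hasDerivAt_discreteAction_add_smul hL m f η)
    filter_upwards [hnear] with t ht
    simpa using hmin _ (hg0 t) (hgm t) ht

theorem sum_range_mul_sub_single_succ {R : Type*} [Ring R] (c : ℕ → R) {m j : ℕ}
    (hj : j + 1 < m) :
    ∑ i ∈ range m, c i * ((Pi.single (j + 1) 1 : ℕ → R) (i + 1) - (Pi.single (j + 1) 1 : ℕ → R) i)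
      = c j - c (j + 1) := by
  simp [Pi.single_apply, mul_sub, sum_sub_distrib, hj, (by omega : j < m)]

theorem hasDerivAt_mul_const_comp_div {φ : ℝ → ℝ} {φ' d v : ℝ} (hφ : HasDerivAt φ φ' (v / d))
    (hd : d ≠ 0) : HasDerivAt (fun v => φ (v / d) * d) φ' v := by
  rw [show φ' = φ' * (1 / d) * d by field_simp]
  exact (hφ.comp v ((hasDerivAt_id v).div_const d)).mul_const d

theorem exists_eq_const_of_eq_succ {α : Type*} {A : ℕ → α} {m : ℕ} (hA : ∀ j, j + 1 < m → A j = A (j + 1)) :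
    ∃ c, ∀ i, i < m → A i = c := by
  refine ⟨A 0, fun i hi => ?_⟩
  induction i with
  | zero => rfl
  | succ n ih => exact (hA n hi).symm.trans (ih (by omega))

theorem discrete_euler_lagrange_general (m : ℕ) (d : ℝ) (hd : 0 < d)
    (x : ℕ → ℝ)
    (σ σw : ℝ → ℝ → ℝ → ℝ)
    (hσ : ∀ s t w, HasDerivAt (σ s t) (σw s t w) w)
    (a b : ℝ) (f : ℕ → ℝ) (hfa : f 0 = a) (hfb : f m = b)
    (hext : ∃ ε > 0,
      (∀ g : ℕ → ℝ, g 0 = a → g m = b → (∀ i, i ≤ m → |g i - f i| < ε) →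
        (∑ i ∈ Finset.range m, σ (x i) (x (i + 1)) ((g (i + 1) - g i) / d) * d)
          ≤ ∑ i ∈ Finset.range m, σ (x i) (x (i + 1)) ((f (i + 1) - f i) / d) * d) ∨
      (∀ g : ℕ → ℝ, g 0 = a → g m = b → (∀ i, i ≤ m → |g i - f i| < ε) →
        (∑ i ∈ Finset.range m, σ (x i) (x (i + 1)) ((f (i + 1) - f i) / d) * d)
          ≤ ∑ i ∈ Finset.range m, σ (x i) (x (i + 1)) ((g (i + 1) - g i) / d) * d)) :
    ∃ c : ℝ, ∀ i, i < m → σw (x i) (x (i + 1)) ((f (i + 1) - f i) / d) = c := by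
  set L' : ℕ → ℝ → ℝ := fun i v => σw (x i) (x (i + 1)) (v / d)
  have hL (i : ℕ) (v : ℝ) :
      HasDerivAt (fun v => σ (x i) (x (i + 1)) (v / d) * d) (L' i v) v :=
    hasDerivAt_mul_const_comp_div (hσ _ _ _) hd.ne'
  refine exists_eq_const_of_eq_succ fun j hj => sub_eq_zero.mp ?_
  have hvar := discreteAction_firstVariation_eq_zero (η := Pi.single (j + 1) 1) hL hfa hfb
    (by simp) (by simp [hj.ne']) hext
  rwa [sum_range_mul_sub_single_succ _ hj] at hvar

/-- Discrete Euler–Lagrange equation (Guseinov): at a local extremum of the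
discrete action `J`, the conjugate momentum `σw` is constant along the extremal. -/
theorem discrete_euler_lagrange (m : ℕ) (hm : 1 ≤ m) (d : ℝ) (hd : 0 < d)
    (x : ℕ → ℝ) (hx : ∀ i, i ≤ m → x i = x 0 + i * d)
    (σ σw : ℝ → ℝ → ℝ → ℝ)
    (hσ : ∀ s t w, HasDerivAt (σ s t) (σw s t w) w)
    (hσw : ∀ s t, Continuous (σw s t))
    (a b : ℝ) (f : ℕ → ℝ) (hfa : f 0 = a) (hfb : f m = b)
    (hext : ∃ ε > 0,
      (∀ g : ℕ → ℝ, g 0 = a → g m = b → (∀ i, i ≤ m → |g i - f i| < ε) →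
        (∑ i ∈ Finset.range m, σ (x i) (x (i + 1)) ((g (i + 1) - g i) / d) * d)
          ≤ ∑ i ∈ Finset.range m, σ (x i) (x (i + 1)) ((f (i + 1) - f i) / d) * d) ∨
      (∀ g : ℕ → ℝ, g 0 = a → g m = b → (∀ i, i ≤ m → |g i - f i| < ε) →
        (∑ i ∈ Finset.range m, σ (x i) (x (i + 1)) ((f (i + 1) - f i) / d) * d)
          ≤ ∑ i ∈ Finset.range m, σ (x i) (x (i + 1)) ((g (i + 1) - g i) / d) * d)) :
    ∃ c : ℝ, ∀ i, i < m → σw (x i) (x (i + 1)) ((f (i + 1) - f i) / d) = c :=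
  discrete_euler_lagrange_general m d hd x σ σw hσ a b f hfa hfb hext
end
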